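/- The prefix relation ≤ on traces is a partial order; in particular it is antisymmetric: if s, t are schedules and there exist schedules u, v with s·u ~ t and t·v ~ s, then s ~ t (equivalently, x ≤ y and y ≤ x imply x = y for traces x, y). -/
import Mathlib


open Classical

universe u v w

/-- Operations `a` and `b` commute in state `q`. -/
def CommuteIn {Q : Type u} {O : Type v} {R : Type w}
    (σ : O → Q → R × Q) (a b : O) (q : Q) : Prop :=
  ∃ (ra rb : R) (q1 q2 q' : Q),
    σ a q = (ra, q1) ∧ σ b q1 = (rb, q') ∧ σ b q = (rb, q2) ∧ σ a q2 = (ra, q')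

/-- Operations `a` and `b` conflict: they fail to commute in some state. -/
def Conflict {Q : Type u} {O : Type v} {R : Type w}
    (σ : O → Q → R × Q) (a b : O) : Prop :=
  ∃ q : Q, ¬ CommuteIn σ a b q

/-- Position in `s` of the `i`-th (0-indexed) occurrence of `o`, if it exists. -/
noncomputable def occIdx {O : Type v} (s : List O) (o : O) (i : ℕ) : Option ℕ :=
  ((List.range s.length).filter (fun k => decide (s[k]? = some o)))[i]?

/-- The `i`-th occurrence of `a` precedes the `j`-th occurrence of `b` in `s`. -/
def Precedes {O : Type v} (s : List O) (a : O) (i : ℕ) (b : O) (j : ℕ) : Prop :=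
  ∃ p q : ℕ, occIdx s a i = some p ∧ occIdx s b j = some q ∧ p < q

/-- Schedule equivalence: same multiset of operations, and the relative order of
any two occurrences of conflicting operations is the same. -/
def ScheduleEquiv {Q : Type u} {O : Type v} {R : Type w}
    (σ : O → Q → R × Q) (s s' : List O) : Prop :=
  (↑s : Multiset O) = (↑s' : Multiset O) ∧
  ∀ (a b : O) (i j : ℕ), Conflict σ a b →
    (Precedes s a i b j ↔ Precedes s' a i b j)

/-- `~` is an equivalence relation (proved here to form the quotient). -/
def scheduleSetoid {Q : Type u} {O : Type v} {R : Type w}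
    (σ : O → Q → R × Q) : Setoid (List O) :=
  ⟨ScheduleEquiv σ,
    ⟨fun _ => ⟨rfl, fun _ _ _ _ _ => Iff.rfl⟩,
     fun h => ⟨h.1.symm, fun a b i j hc => (h.2 a b i j hc).symm⟩,
     fun h h' => ⟨h.1.trans h'.1, fun a b i j hc => (h.2 a b i j hc).trans (h'.2 a b i j hc)⟩⟩⟩

/-- Traces: equivalence classes of schedules. -/
def Trace {Q : Type u} {O : Type v} {R : Type w} (σ : O → Q → R × Q) :=
  Quotient (scheduleSetoid σ)

/-- Prefix order on traces. -/
def TraceLe {Q : Type u} {O : Type v} {R : Type w}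
    (σ : O → Q → R × Q) (x y : Trace σ) : Prop :=
  ∃ s u : List O, x = Quotient.mk (scheduleSetoid σ) s ∧
    y = Quotient.mk (scheduleSetoid σ) (s ++ u)

/-- Executing a schedule from state `q`. -/
def execTrace {Q : Type u} {O : Type v} {R : Type w}
    (σ : O → Q → R × Q) : List O → Q → List (R × Q)
  | [], _ => []
  | o :: s, q => (σ o q) :: execTrace σ s (σ o q).2

/-- Return value of the `i`-th (0-indexed) occurrence of `o` in `s`,
executed from the initial state `q0`. -/
noncomputable def retStar {Q : Type u} {O : Type v} {R : Type w}
    (σ : O → Q → R × Q) (q0 : Q) (o : O) (i : ℕ) (s : List O) : Option R :=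
  (occIdx s o i).bind fun k => ((execTrace σ s q0)[k]?).map Prod.fst
/-- `[s] ≤ [t]`: the trace of `s` is a prefix of the trace of `t`. -/
def SchedPrefix {Q : Type u} {O : Type v} {R : Type w}
    (σ : O → Q → R × Q) (s t : List O) : Prop :=
  ∃ u : List O, ScheduleEquiv σ (s ++ u) t

section Aux
variable {O : Type v}

noncomputable def pos (s : List O) (o : O) : List ℕ :=
  (List.range s.length).filter (fun k => decide (s[k]? = some o))

lemma pos_cons (x : O) (s : List O) (o : O) :
    pos (x :: s) o = (if x = o then [0] else []) ++ (pos s o).map (· + 1) := by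
  simp only [pos, List.length_cons, List.range_succ_eq_map]
  rw [List.filter_cons]
  simp [List.filter_map, Function.comp_def, Nat.succ_eq_add_one]
  split <;> simp_all

lemma pos_length (s : List O) (o : O) : (pos s o).length = s.count o := by
  induction s with
  | nil => simp [pos]
  | cons x s ih => rw [pos_cons]; simp [List.count_cons, ih]; split <;> simp_all <;> omega

lemma pos_append (s v : List O) (o : O) :
    pos (s ++ v) o = pos s o ++ (pos v o).map (· + s.length) := by
  induction s with
  | nil => simp [pos]
  | cons x s ih =>
      rw [List.cons_append, pos_cons, ih, pos_cons]
      simp [List.map_map, Function.comp_def, Nat.add_assoc, Nat.add_comm 1]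

lemma occIdx_eq_pos (s : List O) (o : O) (i : ℕ) : occIdx s o i = (pos s o)[i]? := rfl

lemma occIdx_isSome_iff (s : List O) (o : O) (i : ℕ) :
    (occIdx s o i).isSome ↔ i < s.count o := by
  rw [occIdx_eq_pos]
  simp [Option.isSome_iff_ne_none, List.getElem?_eq_none_iff, pos_length]

lemma occIdx_lt_length {s : List O} {o : O} {i p : ℕ} (h : occIdx s o i = some p) :
    p < s.length := by
  rw [occIdx_eq_pos] at h
  have hp : p ∈ pos s o := List.mem_of_getElem? h
  have := (List.mem_filter.1 hp).1
  simpa using List.mem_range.1 this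

lemma occIdx_append (s v : List O) (o : O) (i : ℕ) :
    occIdx (s ++ v) o i =
      if i < s.count o then occIdx s o i
      else (occIdx v o (i - s.count o)).map (· + s.length) := by
  rw [occIdx_eq_pos, pos_append]
  by_cases h : i < s.count o
  · rw [if_pos h, List.getElem?_append_left (by rw [pos_length]; exact h), occIdx_eq_pos]
  · rw [if_neg h, List.getElem?_append_right (by rw [pos_length]; omega)]
    rw [List.getElem?_map, pos_length, occIdx_eq_pos]

lemma occIdx_eq_some_of_lt {s : List O} {o : O} {i : ℕ} (h : i < s.count o) :
    ∃ p, occIdx s o i = some p :=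
  Option.isSome_iff_exists.1 ((occIdx_isSome_iff s o i).2 h)

lemma lt_count_of_occIdx_eq_some {s : List O} {o : O} {i p : ℕ}
    (h : occIdx s o i = some p) : i < s.count o :=
  (occIdx_isSome_iff s o i).1 (by rw [h]; rfl)

lemma precedes_append_iff (s v : List O) (a b : O) (i j : ℕ) :
    Precedes (s ++ v) a i b j ↔
      (i < s.count a ∧ j < s.count b ∧ Precedes s a i b j) ∨
      (i < s.count a ∧ s.count b ≤ j ∧ j - s.count b < v.count b) ∨
      (s.count a ≤ i ∧ s.count b ≤ j ∧ Precedes v a (i - s.count a) b (j - s.count b)) := by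
  unfold Precedes
  by_cases hi : i < s.count a <;> by_cases hj : j < s.count b
  · simp only [occIdx_append, if_pos hi, if_pos hj]
    constructor
    · rintro ⟨p, q, hp, hq, hpq⟩
      exact Or.inl ⟨hi, hj, p, q, hp, hq, hpq⟩
    · rintro (⟨_, _, h⟩ | ⟨_, h, _⟩ | ⟨h, _, _⟩)
      · exact h
      · omega
      · omega
  · simp only [occIdx_append, if_pos hi, if_neg hj]
    constructor
    · rintro ⟨p, q, hp, hq, hpq⟩
      obtain ⟨q', hq', rfl⟩ := Option.map_eq_some_iff.1 hq
      exact Or.inr (Or.inl ⟨hi, by omega, lt_count_of_occIdx_eq_some hq'⟩)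
    · rintro (⟨_, h, _⟩ | ⟨_, _, h⟩ | ⟨h, _, _⟩)
      · omega
      · obtain ⟨p, hp⟩ := occIdx_eq_some_of_lt hi
        obtain ⟨q', hq'⟩ := occIdx_eq_some_of_lt h
        exact ⟨p, q' + s.length, hp, by rw [hq']; rfl,
          by have := occIdx_lt_length hp; omega⟩
      · omega
  · simp only [occIdx_append, if_neg hi, if_pos hj]
    constructor
    · rintro ⟨p, q, hp, hq, hpq⟩
      obtain ⟨p', hp', rfl⟩ := Option.map_eq_some_iff.1 hp
      have := occIdx_lt_length hq
      omega
    · rintro (⟨h, _, _⟩ | ⟨_, h, _⟩ | ⟨_, h, _⟩) <;> omega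
  · simp only [occIdx_append, if_neg hi, if_neg hj]
    constructor
    · rintro ⟨p, q, hp, hq, hpq⟩
      obtain ⟨p', hp', rfl⟩ := Option.map_eq_some_iff.1 hp
      obtain ⟨q', hq', rfl⟩ := Option.map_eq_some_iff.1 hq
      exact Or.inr (Or.inr ⟨by omega, by omega, p', q', hp', hq', by omega⟩)
    · rintro (⟨h, _, _⟩ | ⟨h, _, _⟩ | ⟨_, _, p', q', hp', hq', hpq⟩)
      · omega
      · omega
      · exact ⟨p' + s.length, q' + s.length, by rw [hp']; rfl, by rw [hq']; rfl, by omega⟩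

end Aux

lemma scheduleEquiv_append_right {Q : Type u} {O : Type v} {R : Type w}
    (σ : O → Q → R × Q) {s s' : List O} (h : ScheduleEquiv σ s s') (v : List O) :
    ScheduleEquiv σ (s ++ v) (s' ++ v) := by
  have hcount : ∀ o : O, s.count o = s'.count o := fun o => by
    have := congrArg (Multiset.count o) h.1; simpa using this
  refine ⟨Multiset.coe_eq_coe.2 ((Multiset.coe_eq_coe.1 h.1).append_right v), fun a b i j hab => ?_⟩
  rw [precedes_append_iff, precedes_append_iff, hcount a, hcount b, h.2 a b i j hab]

lemma scheduleEquiv_trans {Q : Type u} {O : Type v} {R : Type w}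
    {σ : O → Q → R × Q} {s t r : List O}
    (h1 : ScheduleEquiv σ s t) (h2 : ScheduleEquiv σ t r) : ScheduleEquiv σ s r :=
  ⟨h1.1.trans h2.1, fun a b i j hc => (h1.2 a b i j hc).trans (h2.2 a b i j hc)⟩

/-- the prefix relation `≤` on traces is a partial order
(reflexive, transitive), and in particular antisymmetric: if `s·u ~ t` and
`t·v ~ s` for some `u, v`, then `s ~ t` (i.e. equal traces). -/
theorem trace_prefix_partialOrder
    {Q : Type u} {O : Type v} {R : Type w} (σ : O → Q → R × Q) :
    (∀ s : List O, SchedPrefix σ s s) ∧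
    (∀ s t r : List O, SchedPrefix σ s t → SchedPrefix σ t r → SchedPrefix σ s r) ∧
    (∀ s t : List O, SchedPrefix σ s t → SchedPrefix σ t s → ScheduleEquiv σ s t) := by
  refine ⟨?_, ?_, ?_⟩
  · intro s
    exact ⟨[], by rw [List.append_nil]; exact ⟨rfl, fun _ _ _ _ _ => Iff.rfl⟩⟩
  · rintro s t r ⟨u, hu⟩ ⟨w, hw⟩
    refine ⟨u ++ w, ?_⟩
    rw [← List.append_assoc]
    exact scheduleEquiv_trans (scheduleEquiv_append_right σ hu w) hw
  · rintro s t ⟨u, hu⟩ ⟨w, hw⟩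
    have h1 : s.length + u.length = t.length := by
      have := congrArg Multiset.card hu.1; simpa using this
    have h2 : t.length + w.length = s.length := by
      have := congrArg Multiset.card hw.1; simpa using this
    have hu0 : u = [] := List.length_eq_zero_iff.1 (by omega)
    subst hu0
    rw [List.append_nil] at hu
    exact hu
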